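/- Let Y be a nonempty set, 𝔹 = {0,1}, and let μ, ν be finitely supported probability distributions on 𝔹 × Y, with p := ∑_y μ(1,y), q := ∑_y ν(1,y), and conditional distributions μ̄₁, μ̄₀, ν̄₁, ν̄₀ on Y (i.e. μ(1,y) = p·μ̄₁(y), μ(0,y) = (1−p)·μ̄₀(y), ν(1,y) = q·ν̄₁(y), ν(0,y) = (1−q)·ν̄₀(y) for all y, arbitrary when the mass is 0). Then Re_∞(μ,ν) = max{ log(p/q) + Re_∞(μ̄₁,ν̄₁), log((1−p)/(1−q)) + Re_∞(μ̄₀,ν̄₀) }, with all arithmetic in the extended reals and the total value lying in [0,∞]. -/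

import Mathlib

/-!
`exp Re_∞(μ, ν)` is the largest likelihood ratio `μ(x) / ν(x)`, computed in `[0, ∞]`. On the
fibre over `b ∈ 𝔹` this ratio factors as the ratio of the fibre masses times the ratio of the
conditional distributions, and multiplication by a constant commutes with suprema in `[0, ∞]`;
the supremum over `𝔹 × Y` is the maximum of the two fibrewise suprema. Since `log : [0, ∞] ≃o
[-∞, ∞]` turns maxima into maxima and products into sums, this gives the chain rule. The
truncation to `[0, ∞]` is harmless because two probability distributions always have some
`x` with `ν(x) ≤ μ(x)` and `0 < μ(x)`, so the largest ratio is at least `1`.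
-/

open scoped ENNReal

/- A finitely supported probability distribution on `X`. -/
structure FinDist (X : Type*) where
  f : X → ℝ
  nonneg : ∀ x, 0 ≤ f x
  finite : (Function.support f).Finite
  sum_one : ∑ᶠ x, f x = 1

/- Truncation of an extended real to `[0,∞]`. -/
noncomputable def toENN (x : EReal) : ℝ≥0∞ :=
  if x = ⊤ then ⊤ else ENNReal.ofReal x.toReal

/- Rényi divergence of order `α` (`0 ≤ α < ∞`, `α ≠ 1`):
`(1/(α−1))·log(∑ₓ μ(x)^α / ν(x)^{α−1})`, computed in `[0,∞]`, where terms with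
`μ(x) = 0` vanish, `a/0 = ∞` for `0 < a` (via `ENNReal` division and `rpow`),
and `log ∞ = ∞`. -/
open Classical in
noncomputable def renyi {X : Type*} (α : ℝ) (μ ν : FinDist X) : ℝ≥0∞ :=
  toENN ((((α - 1)⁻¹ : ℝ) : EReal) *
    ENNReal.log (∑ᶠ x, if μ.f x = 0 then 0
      else ENNReal.ofReal (μ.f x) ^ α / ENNReal.ofReal (ν.f x) ^ (α - 1)))

/- Rényi divergence of order `∞`: `sup_x log (μ(x)/ν(x))`, with `a/0 = ∞` for
`a > 0`, `0/0 = 0` (both via `ENNReal` division) and `log ∞ = ∞`. -/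
noncomputable def renyiInf {X : Type*} (μ ν : FinDist X) : ℝ≥0∞ :=
  toENN (⨆ x, ENNReal.log (ENNReal.ofReal (μ.f x) / ENNReal.ofReal (ν.f x)))

namespace FinDist

variable {X Y : Type*}

noncomputable def maxRatio (μ ν : FinDist X) : ℝ≥0∞ :=
  ⨆ x, ENNReal.ofReal (μ.f x) / ENNReal.ofReal (ν.f x)

lemma sum_eq_one_of_support_subset (μ : FinDist X) {s : Finset X}
    (hs : Function.support μ.f ⊆ s) : ∑ x ∈ s, μ.f x = 1 := by
  rw [← finsum_eq_finsetSum_of_support_subset _ hs, μ.sum_one]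

lemma exists_pos_and_le (μ ν : FinDist X) : ∃ x, 0 < μ.f x ∧ ν.f x ≤ μ.f x := by
  classical
  by_contra! h
  set s := μ.finite.toFinset ∪ ν.finite.toFinset
  have hμ : ∑ x ∈ s, μ.f x = 1 :=
    μ.sum_eq_one_of_support_subset fun x hx => by simp [s, hx]
  have hν : ∑ x ∈ s, ν.f x = 1 :=
    ν.sum_eq_one_of_support_subset fun x hx => by simp [s, hx]
  obtain ⟨x, hxs, hx⟩ := Finset.exists_ne_zero_of_sum_ne_zero (hμ ▸ one_ne_zero)
  have hle : ∀ y ∈ s, μ.f y ≤ ν.f y := fun y _ =>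
    (μ.nonneg y).eq_or_lt.elim (fun h0 => h0 ▸ ν.nonneg y) fun hpos => (h y hpos).le
  have := Finset.sum_lt_sum hle ⟨x, hxs, h x ((μ.nonneg x).lt_of_ne' hx)⟩
  linarith

lemma one_le_maxRatio (μ ν : FinDist X) : 1 ≤ maxRatio μ ν := by
  obtain ⟨x, hpos, hle⟩ := exists_pos_and_le μ ν
  have hx : ENNReal.ofReal (μ.f x) ≠ 0 := by simpa using hpos
  calc 1 = ENNReal.ofReal (μ.f x) / ENNReal.ofReal (μ.f x) :=
        (ENNReal.div_self hx ENNReal.ofReal_ne_top).symm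
    _ ≤ ENNReal.ofReal (μ.f x) / ENNReal.ofReal (ν.f x) :=
        ENNReal.div_le_div_left (ENNReal.ofReal_le_ofReal hle) _
    _ ≤ maxRatio μ ν := le_iSup (fun x => ENNReal.ofReal (μ.f x) / ENNReal.ofReal (ν.f x)) x

lemma renyiInf_eq_toENN_log_maxRatio (μ ν : FinDist X) :
    renyiInf μ ν = toENN (ENNReal.log (maxRatio μ ν)) :=
  congrArg toENN (ENNReal.logOrderIso.map_iSup _).symm

lemma coe_renyiInf (μ ν : FinDist X) :
    (renyiInf μ ν : EReal) = ENNReal.log (maxRatio μ ν) := by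
  rw [renyiInf_eq_toENN_log_maxRatio]
  exact EReal.coe_toENNReal (ENNReal.zero_le_log_iff.mpr (one_le_maxRatio μ ν))

lemma maxRatio_prod_bool (μ ν : FinDist (Bool × Y)) :
    maxRatio μ ν = max (⨆ y, ENNReal.ofReal (μ.f (true, y)) / ENNReal.ofReal (ν.f (true, y)))
      (⨆ y, ENNReal.ofReal (μ.f (false, y)) / ENNReal.ofReal (ν.f (false, y))) := by
  rw [maxRatio, iSup_prod, iSup_bool_eq]

lemma iSup_ratio_of_eq_mul {F G : Y → ℝ} {a c : ℝ} (μ' ν' : FinDist Y)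
    (hF : ∀ y, F y = a * μ'.f y) (hG : ∀ y, G y = c * ν'.f y) :
    ⨆ y, ENNReal.ofReal (F y) / ENNReal.ofReal (G y)
      = ENNReal.ofReal a / ENNReal.ofReal c * maxRatio μ' ν' := by
  simp_rw [hF, hG, ENNReal.ofReal_mul' (μ'.nonneg _), ENNReal.ofReal_mul' (ν'.nonneg _),
    ENNReal.mul_div_mul_comm (Or.inr ENNReal.ofReal_ne_top) (Or.inl ENNReal.ofReal_ne_top)]
  exact (ENNReal.mul_iSup _ _).symm

end FinDist

theorem renyiInf_chain_rule_prod_general {Y : Type*}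
    (μ ν : FinDist (Bool × Y)) (μ1 μ0 ν1 ν0 : FinDist Y) (p q : ℝ)
    (hμ1 : ∀ y, μ.f (true, y) = p * μ1.f y)
    (hμ0 : ∀ y, μ.f (false, y) = (1 - p) * μ0.f y)
    (hν1 : ∀ y, ν.f (true, y) = q * ν1.f y)
    (hν0 : ∀ y, ν.f (false, y) = (1 - q) * ν0.f y) :
    renyiInf μ ν = toENN
      (max
        (ENNReal.log (ENNReal.ofReal p / ENNReal.ofReal q)
          + (renyiInf μ1 ν1 : EReal))
        (ENNReal.log (ENNReal.ofReal (1 - p) / ENNReal.ofReal (1 - q))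
          + (renyiInf μ0 ν0 : EReal))) := by
  rw [FinDist.renyiInf_eq_toENN_log_maxRatio, FinDist.maxRatio_prod_bool,
    FinDist.iSup_ratio_of_eq_mul μ1 ν1 hμ1 hν1, FinDist.iSup_ratio_of_eq_mul μ0 ν0 hμ0 hν0,
    ENNReal.log_monotone.map_max, ENNReal.log_mul_add, ENNReal.log_mul_add,
    FinDist.coe_renyiInf, FinDist.coe_renyiInf]

theorem renyiInf_chain_rule_prod {Y : Type*} [Nonempty Y]
    (μ ν : FinDist (Bool × Y)) (μ1 μ0 ν1 ν0 : FinDist Y) (p q : ℝ)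
    (hp : p = ∑ᶠ y, μ.f (true, y))
    (hq : q = ∑ᶠ y, ν.f (true, y))
    (hμ1 : ∀ y, μ.f (true, y) = p * μ1.f y)
    (hμ0 : ∀ y, μ.f (false, y) = (1 - p) * μ0.f y)
    (hν1 : ∀ y, ν.f (true, y) = q * ν1.f y)
    (hν0 : ∀ y, ν.f (false, y) = (1 - q) * ν0.f y) :
    renyiInf μ ν = toENN
      (max
        (ENNReal.log (ENNReal.ofReal p / ENNReal.ofReal q)
          + (renyiInf μ1 ν1 : EReal))
        (ENNReal.log (ENNReal.ofReal (1 - p) / ENNReal.ofReal (1 - q))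
          + (renyiInf μ0 ν0 : EReal))) :=
  renyiInf_chain_rule_prod_general μ ν μ1 μ0 ν1 ν0 p q hμ1 hμ0 hν1 hν0
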